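/- arXiv:2203.08237 — 8 statements merged into one kernel-verified Lean document; each statement's English description precedes it below -/
import Mathlib

section
/- Let X be a compact metric space, G a non-empty closed relation on X, and α an open cover of X. For all positive integers m and n, the minimal number of (m+n+1)-boxes from α^{m+n+1} needed to cover the (m+n)-th Mahavier product ⋆_{i=1}^{m+n} G^{-1} is at most the product of the minimal number of (m+1)-boxes covering ⋆_{i=1}^{m} G^{-1} and the minimal number of (n+1)-boxes covering ⋆_{i=1}^{n} G^{-1}. -/
open Filter Topology

/-- Minimal number of members of `U` needed to cover `K`. -/
noncomputable def covN {Z : Type*} (K : Set Z) (U : Set (Set Z)) : ℕ :=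
  sInf {n | ∃ V : Finset (Set Z), ↑V ⊆ U ∧ V.card = n ∧ K ⊆ ⋃ S ∈ V, S}

/-- The family of `n`-boxes generated by the family `α`. -/
def boxes {X : Type*} (α : Set (Set X)) (n : ℕ) : Set (Set (Fin n → X)) :=
  {S | ∃ A : Fin n → Set X, (∀ i, A i ∈ α) ∧ S = {x | ∀ i, x i ∈ A i}}

/-- The `m`-th Mahavier product `⋆_{i=1}^m G⁻¹`. -/
def mah {X : Type*} (G : Set (X × X)) (m : ℕ) : Set (Fin (m + 1) → X) :=
  {x | ∀ i : Fin m, (x i.succ, x i.castSucc) ∈ G}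

/-- `α` is an open cover of the whole space. -/
def IsOpenCover {X : Type*} [TopologicalSpace X] (α : Set (Set X)) : Prop :=
  (∀ U ∈ α, IsOpen U) ∧ ⋃₀ α = Set.univ

/-- The entropy of `G` with respect to the open cover `α`
(the limit of `log N(⋆_{i=1}^m G⁻¹, α^{m+1}) / m`). -/
noncomputable def entCov {X : Type*} [TopologicalSpace X] (G : Set (X × X))
    (α : Set (Set X)) : ℝ :=
  limsup (fun m : ℕ => Real.log (covN (mah G m) (boxes α (m + 1))) / m) atTop

open Classical in
/-- The entropy of a closed relation `G`. -/
noncomputable def entRel {X : Type*} [TopologicalSpace X] (G : Set (X × X)) : EReal :=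
  if G = ∅ then 0
  else sSup {x : EReal | ∃ α : Set (Set X), IsOpenCover α ∧ x = (entCov G α : EReal)}

open Classical in
noncomputable def boxFam {X : Type*} (α : Set (Set X)) (k : ℕ) (S : Set (Fin k → X)) :
    Fin k → Set X :=
  if h : S ∈ boxes α k then h.choose else fun _ => Set.univ

theorem boxFam_spec {X : Type*} {α : Set (Set X)} {k : ℕ} {S : Set (Fin k → X)}
    (h : S ∈ boxes α k) :
    (∀ i, boxFam α k S i ∈ α) ∧ S = {x | ∀ i, x i ∈ boxFam α k S i} := by
  unfold boxFam
  rw [dif_pos h]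
  exact ⟨h.choose_spec.1, h.choose_spec.2⟩

theorem box_isOpen {X : Type*} [TopologicalSpace X] {α : Set (Set X)}
    (hα : ∀ U ∈ α, IsOpen U) {N : ℕ} {S : Set (Fin N → X)} (hS : S ∈ boxes α N) :
    IsOpen S := by
  obtain ⟨A, hA, rfl⟩ := hS
  have : {x : Fin N → X | ∀ i, x i ∈ A i} = ⋂ i, (fun x : Fin N → X => x i) ⁻¹' (A i) := by
    ext; simp
  rw [this]
  exact isOpen_iInter_of_finite fun i => (hα _ (hA i)).preimage (continuous_apply i)

theorem mah_isClosed {X : Type*} [TopologicalSpace X] {G : Set (X × X)} (hG : IsClosed G)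
    (k : ℕ) : IsClosed (mah G k) := by
  have : mah G k = ⋂ i : Fin k,
      (fun x : Fin (k + 1) → X => (x i.succ, x i.castSucc)) ⁻¹' G := by
    ext; simp [mah]
  rw [this]
  exact isClosed_iInter fun i => hG.preimage ((continuous_apply _).prodMk (continuous_apply _))

theorem exists_cover {X : Type*} [TopologicalSpace X] [CompactSpace X] {α : Set (Set X)}
    (hα : IsOpenCover α) {N : ℕ} (K : Set (Fin N → X)) (hK : IsClosed K) :
    {k | ∃ V : Finset (Set (Fin N → X)), ↑V ⊆ boxes α N ∧ V.card = k ∧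
      K ⊆ ⋃ S ∈ V, S}.Nonempty := by
  classical
  have hcomp : IsCompact K := hK.isCompact
  have hcov : K ⊆ ⋃ S : boxes α N, (S : Set (Fin N → X)) := by
    intro x _
    have h1 : ∀ i, ∃ A ∈ α, x i ∈ A := by
      intro i
      have := hα.2 ▸ Set.mem_univ (x i)
      simpa [Set.mem_sUnion] using this
    choose A hA hxA using h1
    exact Set.mem_iUnion.2 ⟨⟨_, ⟨A, hA, rfl⟩⟩, hxA⟩
  obtain ⟨t, ht⟩ := hcomp.elim_finite_subcover (fun S : boxes α N => (S : Set (Fin N → X)))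
    (fun S => box_isOpen hα.1 S.2) hcov
  refine ⟨(t.image Subtype.val).card, t.image Subtype.val, ?_, rfl, ?_⟩
  · intro S hS
    simp only [Finset.coe_image, Set.mem_image, Finset.mem_coe] at hS
    obtain ⟨⟨S', hS'⟩, _, rfl⟩ := hS
    exact hS'
  · intro x hx
    obtain ⟨S, hSt, hxS⟩ := Set.mem_iUnion₂.1 (ht hx)
    exact Set.mem_iUnion₂.2 ⟨S, Finset.mem_image_of_mem _ hSt, hxS⟩

theorem stmt_0 {X : Type*} [MetricSpace X] [CompactSpace X]
    (G : Set (X × X)) (hGc : IsClosed G) (hGne : G.Nonempty)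
    (α : Set (Set X)) (hα : IsOpenCover α) (m n : ℕ) (hm : 0 < m) (hn : 0 < n) :
    covN (mah G (m + n)) (boxes α (m + n + 1)) ≤
      covN (mah G m) (boxes α (m + 1)) * covN (mah G n) (boxes α (n + 1)) := by
  classical
  obtain ⟨V, hVsub, hVcard, hVcov⟩ := Nat.sInf_mem (exists_cover hα (mah G m) (mah_isClosed hGc m))
  obtain ⟨W, hWsub, hWcard, hWcov⟩ := Nat.sInf_mem (exists_cover hα (mah G n) (mah_isClosed hGc n))
  -- glue
  set C : Set (Fin (m + 1) → X) → Set (Fin (n + 1) → X) → Fin (m + n + 1) → Set X :=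
    fun P Q i =>
      if h : (i : ℕ) < m + 1 then boxFam α (m + 1) P ⟨i, h⟩
      else boxFam α (n + 1) Q ⟨(i : ℕ) - m, by have := i.isLt; omega⟩ with hC
  set glue : Set (Fin (m + 1) → X) × Set (Fin (n + 1) → X) → Set (Fin (m + n + 1) → X) :=
    fun PQ => {x | ∀ i, x i ∈ C PQ.1 PQ.2 i} with hglue
  set F : Finset (Set (Fin (m + n + 1) → X)) := (V ×ˢ W).image glue with hF
  have hFsub : ↑F ⊆ boxes α (m + n + 1) := by
    intro S hS
    simp only [hF, Finset.coe_image, Set.mem_image, Finset.mem_coe, Finset.mem_product] at hS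
    obtain ⟨⟨P, Q⟩, ⟨hP, hQ⟩, rfl⟩ := hS
    refine ⟨C P Q, fun i => ?_, rfl⟩
    rw [hC]
    dsimp only
    split
    · exact (boxFam_spec (hVsub hP)).1 _
    · exact (boxFam_spec (hWsub hQ)).1 _
  have hFcov : mah G (m + n) ⊆ ⋃ S ∈ F, S := by
    intro x hx
    have hxu : (fun i : Fin (m + 1) => x ⟨i, by omega⟩) ∈ mah G m := by
      intro i
      exact hx ⟨(i : ℕ), by omega⟩
    have hxv : (fun j : Fin (n + 1) => x ⟨m + j, by omega⟩) ∈ mah G n := by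
      intro j
      exact hx ⟨m + (j : ℕ), by omega⟩
    obtain ⟨P, hP, hxP⟩ := Set.mem_iUnion₂.1 (hVcov hxu)
    obtain ⟨Q, hQ, hxQ⟩ := Set.mem_iUnion₂.1 (hWcov hxv)
    refine Set.mem_iUnion₂.2 ⟨glue (P, Q), ?_, ?_⟩
    · exact Finset.mem_image_of_mem _ (Finset.mem_product.2 ⟨hP, hQ⟩)
    · intro i
      rw [hC]
      dsimp only
      split
      · rename_i h
        have hP' := (boxFam_spec (hVsub hP)).2
        rw [hP'] at hxP
        exact hxP ⟨(i : ℕ), h⟩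
      · rename_i h
        have hQ' := (boxFam_spec (hWsub hQ)).2
        rw [hQ'] at hxQ
        simp only [Set.mem_setOf_eq] at hxQ
        have := hxQ ⟨(i : ℕ) - m, by have := i.isLt; omega⟩
        have he : (⟨m + ((i : ℕ) - m), by have := i.isLt; omega⟩ : Fin (m + n + 1)) = i :=
          Fin.ext (by simp; omega)
        rwa [he] at this
  calc covN (mah G (m + n)) (boxes α (m + n + 1)) ≤ F.card :=
        Nat.sInf_le ⟨F, hFsub, rfl, hFcov⟩
    _ ≤ (V ×ˢ W).card := Finset.card_image_le
    _ = V.card * W.card := Finset.card_product _ _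
    _ = _ := by rw [hVcard, hWcard]; rfl
end

section
/- Let X be a compact metric space, G a non-empty closed relation on X, and α an open cover of X. Then the limit lim_{m→∞} (log N(⋆_{i=1}^{m} G^{-1}, α^{m+1}))/m exists (in the reals). -/
open Filter Topology

/-!
Splicing a box cover of `⋆_{i=1}^m G⁻¹` with one of `⋆_{i=1}^n G⁻¹` along the shared coordinate
`m` covers `⋆_{i=1}^{m+n} G⁻¹`, so `N_m = N(⋆_{i=1}^m G⁻¹, α^{m+1})` is submultiplicative; by
compactness every `N_m` is finite. Hence `log N_m` is a nonnegative subadditive sequence (also when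
some `N_m = 0`, since `Real.log 0 = 0`), and Fekete's lemma gives the limit of `log N_m / m`.
-/

section Covering

variable {Z : Type*} {K : Set Z} {U : Set (Set Z)}

theorem covN_le_card {V : Finset (Set Z)} (hVU : ↑V ⊆ U) (hKV : K ⊆ ⋃ S ∈ V, S) :
    covN K U ≤ V.card :=
  Nat.sInf_le ⟨V, hVU, rfl, hKV⟩

theorem exists_finset_card_eq_covN (h : ∃ V : Finset (Set Z), ↑V ⊆ U ∧ K ⊆ ⋃ S ∈ V, S) :
    ∃ V : Finset (Set Z), ↑V ⊆ U ∧ V.card = covN K U ∧ K ⊆ ⋃ S ∈ V, S := by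
  obtain ⟨V, hVU, hKV⟩ := h
  exact Nat.sInf_mem (s := {n | ∃ V : Finset (Set Z), ↑V ⊆ U ∧ V.card = n ∧ K ⊆ ⋃ S ∈ V, S})
    ⟨V.card, V, hVU, rfl, hKV⟩

theorem covN_le_mul {Y₁ Y₂ : Type*} {K₁ : Set Y₁} {U₁ : Set (Set Y₁)} {K₂ : Set Y₂}
    {U₂ : Set (Set Y₂)} (f : Z → Y₁) (g : Z → Y₂) (hK : K ⊆ f ⁻¹' K₁ ∩ g ⁻¹' K₂)
    (h₁ : ∃ V : Finset (Set Y₁), ↑V ⊆ U₁ ∧ K₁ ⊆ ⋃ S ∈ V, S)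
    (h₂ : ∃ W : Finset (Set Y₂), ↑W ⊆ U₂ ∧ K₂ ⊆ ⋃ T ∈ W, T)
    (hU : ∀ S ∈ U₁, ∀ T ∈ U₂, ∃ R ∈ U, f ⁻¹' S ∩ g ⁻¹' T ⊆ R) :
    covN K U ≤ covN K₁ U₁ * covN K₂ U₂ := by
  classical
  obtain ⟨V, hVU, hVcard, hKV⟩ := exists_finset_card_eq_covN h₁
  obtain ⟨W, hWU, hWcard, hKW⟩ := exists_finset_card_eq_covN h₂
  choose! R hRU hR using hU
  let F := (V ×ˢ W).image fun p => R p.1 p.2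
  have hFU : ↑F ⊆ U := by
    rintro _ hR'
    obtain ⟨⟨S, T⟩, hST, rfl⟩ := Finset.mem_image.mp hR'
    rw [Finset.mem_product] at hST
    exact hRU S (hVU hST.1) T (hWU hST.2)
  have hKF : K ⊆ ⋃ R' ∈ F, R' := by
    intro z hz
    obtain ⟨S, hSV, hzS⟩ := Set.mem_iUnion₂.mp (hKV (hK hz).1)
    obtain ⟨T, hTW, hzT⟩ := Set.mem_iUnion₂.mp (hKW (hK hz).2)
    have hST : (S, T) ∈ V ×ˢ W := Finset.mem_product.mpr ⟨hSV, hTW⟩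
    exact Set.mem_biUnion (Finset.mem_image_of_mem (fun p => R p.1 p.2) hST)
      (hR S (hVU hSV) T (hWU hTW) ⟨hzS, hzT⟩)
  calc covN K U ≤ F.card := covN_le_card hFU hKF
    _ ≤ (V ×ˢ W).card := Finset.card_image_le
    _ = covN K₁ U₁ * covN K₂ U₂ := by rw [Finset.card_product, hVcard, hWcard]

end Covering

section Boxes

variable {X : Type*} {α : Set (Set X)}

theorem exists_finset_boxes_cover [TopologicalSpace X] [CompactSpace X] (hα : IsOpenCover α)
    (n : ℕ) (K : Set (Fin n → X)) :
    ∃ V : Finset (Set (Fin n → X)), ↑V ⊆ boxes α n ∧ K ⊆ ⋃ S ∈ V, S := by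
  have hopen : ∀ S ∈ boxes α n, IsOpen S := by
    rintro _ ⟨A, hA, rfl⟩
    rw [show {x : Fin n → X | ∀ i, x i ∈ A i} = Set.univ.pi A by ext; simp]
    exact isOpen_set_pi Set.finite_univ fun i _ => hα.1 _ (hA i)
  have hcover : Set.univ ⊆ ⋃ S ∈ boxes α n, S := by
    intro x _
    have hx : ∀ i, x i ∈ ⋃₀ α := fun i => hα.2 ▸ Set.mem_univ (x i)
    choose A hA hxA using hx
    exact Set.mem_biUnion ⟨A, hA, rfl⟩ hxA
  obtain ⟨V, hVU, hV, hKV⟩ :=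
    isCompact_univ.elim_finite_subcover_image hopen hcover
  exact ⟨hV.toFinset, by simpa using hVU, fun x _ => by simpa using hKV (Set.mem_univ x)⟩

/-- The boxes over the first `m + 1` and the last `n + 1` of `m + n + 1` coordinates share
coordinate `m`; their intersection lies in the box that keeps the second factor there. -/
theorem exists_boxes_superset_inter {m n : ℕ} {S : Set (Fin (m + 1) → X)}
    {T : Set (Fin (n + 1) → X)} (hS : S ∈ boxes α (m + 1)) (hT : T ∈ boxes α (n + 1)) :
    ∃ R ∈ boxes α (m + n + 1),
      (fun (x : Fin (m + n + 1) → X) i => x (Fin.castLE (by omega) i)) ⁻¹' S ∩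
        (fun (x : Fin (m + n + 1) → X) j => x (Fin.natAdd m j)) ⁻¹' T ⊆ R := by
  obtain ⟨A, hA, rfl⟩ := hS
  obtain ⟨B, hB, rfl⟩ := hT
  let C : Fin (m + (n + 1)) → Set X := Fin.append (fun i : Fin m => A i.castSucc) B
  refine ⟨_, ⟨C, fun i => ?_, rfl⟩, ?_⟩
  · exact Fin.addCases (m := m) (n := n + 1) (fun i => by simpa [C] using hA _)
      (fun j => by simpa [C] using hB j) i
  · rintro x ⟨hxA, hxB⟩ i
    refine Fin.addCases (m := m) (n := n + 1) (fun i => ?_) (fun j => ?_) i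
    · simp only [C, Fin.append_left]
      exact hxA i.castSucc
    · simp only [C, Fin.append_right]
      exact hxB j

end Boxes

theorem mah_add_subset {X : Type*} (G : Set (X × X)) (m n : ℕ) :
    mah G (m + n) ⊆ (fun x i => x (Fin.castLE (by omega) i)) ⁻¹' mah G m ∩
      (fun x j => x (Fin.natAdd m j)) ⁻¹' mah G n := by
  intro x hx
  exact ⟨fun i => hx (Fin.castLE (by omega) i), fun j => hx (Fin.natAdd m j)⟩

theorem covN_mah_add_le {X : Type*} [TopologicalSpace X] [CompactSpace X] {G : Set (X × X)}
    {α : Set (Set X)} (hα : IsOpenCover α) (m n : ℕ) :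
    covN (mah G (m + n)) (boxes α (m + n + 1)) ≤
      covN (mah G m) (boxes α (m + 1)) * covN (mah G n) (boxes α (n + 1)) :=
  covN_le_mul _ _ (mah_add_subset G m n) (exists_finset_boxes_cover hα _ _)
    (exists_finset_boxes_cover hα _ _) fun _ hS _ hT => exists_boxes_superset_inter hS hT

theorem Real.log_natCast_le_add_of_le_mul {a b c : ℕ} (h : c ≤ a * b) :
    Real.log c ≤ Real.log a + Real.log b := by
  rcases Nat.eq_zero_or_pos c with rfl | hc
  · simpa using add_nonneg (Real.log_natCast_nonneg a) (Real.log_natCast_nonneg b)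
  · have ha : (a : ℝ) ≠ 0 := by norm_cast; rintro rfl; omega
    have hb : (b : ℝ) ≠ 0 := by norm_cast; rintro rfl; omega
    rw [← Real.log_mul ha hb]
    exact Real.log_le_log (by exact_mod_cast hc) (by exact_mod_cast h)

theorem exists_tendsto_log_div_of_le_mul (a : ℕ → ℕ) (h : ∀ m n, a (m + n) ≤ a m * a n) :
    ∃ L : ℝ, Tendsto (fun n : ℕ => Real.log (a n) / n) atTop (𝓝 L) := by
  have hsub : Subadditive fun n => Real.log (a n) := fun m n =>
    Real.log_natCast_le_add_of_le_mul (h m n)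
  have hbdd : BddBelow (Set.range fun n : ℕ => Real.log (a n) / n) :=
    ⟨0, by rintro _ ⟨n, rfl⟩; exact div_nonneg (Real.log_natCast_nonneg _) n.cast_nonneg⟩
  exact ⟨hsub.lim, hsub.tendsto_lim hbdd⟩

theorem stmt_2_general {X : Type*} [MetricSpace X] [CompactSpace X]
    (G : Set (X × X))
    (α : Set (Set X)) (hα : IsOpenCover α) :
    ∃ L : ℝ, Tendsto
      (fun m : ℕ => Real.log (covN (mah G m) (boxes α (m + 1))) / m) atTop (𝓝 L) :=
  exists_tendsto_log_div_of_le_mul _ (covN_mah_add_le hα)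

theorem stmt_2 {X : Type*} [MetricSpace X] [CompactSpace X]
    (G : Set (X × X)) (hGc : IsClosed G) (hGne : G.Nonempty)
    (α : Set (Set X)) (hα : IsOpenCover α) :
    ∃ L : ℝ, Tendsto
      (fun m : ℕ => Real.log (covN (mah G m) (boxes α (m + 1))) / m) atTop (𝓝 L) :=
  stmt_2_general G α hα
end

section
/- Let X be a compact metric space and G a closed relation on X. Then for every open cover α of X and every positive integer m, N(⋆_{i=1}^{m} G, α^{m+1}) = N(⋆_{i=1}^{m} G^{-1}, α^{m+1}), and consequently ent(G^{-1}) = ent(G). -/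
open Filter Topology

/-- The inverse relation `G⁻¹ = {(y,x) | (x,y) ∈ G}`. -/
def invRel {X : Type*} (G : Set (X × X)) : Set (X × X) :=
  {p | (p.2, p.1) ∈ G}

lemma covSet_subset {Z : Type*} (e : Z → Z) (he : Function.Involutive e)
    (K : Set Z) (U : Set (Set Z)) (hU : ∀ S ∈ U, e ⁻¹' S ∈ U) :
    {n | ∃ V : Finset (Set Z), ↑V ⊆ U ∧ V.card = n ∧ K ⊆ ⋃ S ∈ V, S} ⊆
    {n | ∃ V : Finset (Set Z), ↑V ⊆ U ∧ V.card = n ∧ e ⁻¹' K ⊆ ⋃ S ∈ V, S} := by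
  classical
  rintro n ⟨V, hVU, hcard, hcov⟩
  refine ⟨V.image (e ⁻¹' ·), ?_, ?_, ?_⟩
  · intro S hS
    simp only [Finset.coe_image, Set.mem_image, Finset.mem_coe] at hS
    obtain ⟨T, hT, rfl⟩ := hS
    exact hU T (hVU hT)
  · rw [Finset.card_image_of_injective _ (Set.preimage_injective.mpr he.surjective)]
    exact hcard
  · intro x hx
    have hx' := hcov hx
    simp only [Set.mem_iUnion, exists_prop] at hx' ⊢
    obtain ⟨S, hS, hxS⟩ := hx'
    exact ⟨e ⁻¹' S, Finset.mem_image_of_mem _ hS, hxS⟩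

lemma covN_preimage {Z : Type*} (e : Z → Z) (he : Function.Involutive e)
    (K : Set Z) (U : Set (Set Z)) (hU : ∀ S ∈ U, e ⁻¹' S ∈ U) :
    covN (e ⁻¹' K) U = covN K U := by
  have hKK : e ⁻¹' (e ⁻¹' K) = K := by ext x; simp [he x]
  unfold covN
  congr 1
  apply Set.Subset.antisymm
  · have := covSet_subset e he (e ⁻¹' K) U hU
    rwa [hKK] at this
  · exact covSet_subset e he K U hU

lemma mah_preimage {X : Type*} (G : Set (X × X)) (m : ℕ) :
    (fun x : Fin (m + 1) → X => fun i => x i.rev) ⁻¹' mah G m = mah (invRel G) m := by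
  ext x
  simp only [mah, invRel, Set.mem_preimage, Set.mem_setOf_eq]
  constructor
  · intro h i
    have := h i.rev
    simpa [Fin.rev_succ, Fin.rev_castSucc, Fin.rev_rev] using this
  · intro h i
    have := h i.rev
    simpa [Fin.rev_succ, Fin.rev_castSucc, Fin.rev_rev] using this

lemma boxes_stable {X : Type*} (α : Set (Set X)) (m : ℕ) :
    ∀ S ∈ boxes α (m + 1),
      (fun x : Fin (m + 1) → X => fun i => x i.rev) ⁻¹' S ∈ boxes α (m + 1) := by
  rintro S ⟨A, hA, rfl⟩
  refine ⟨fun i => A i.rev, fun i => hA i.rev, ?_⟩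
  ext x
  simp only [Set.mem_preimage, Set.mem_setOf_eq]
  constructor
  · intro h i; simpa [Fin.rev_rev] using h i.rev
  · intro h i; simpa [Fin.rev_rev] using h i.rev

lemma rev_involutive {X : Type*} (m : ℕ) :
    Function.Involutive (fun x : Fin (m + 1) → X => fun i => x i.rev) := by
  intro x; funext i; simp [Fin.rev_rev]

lemma covN_mah_inv {X : Type*} (G : Set (X × X)) (α : Set (Set X)) (m : ℕ) :
    covN (mah (invRel G) m) (boxes α (m + 1)) = covN (mah G m) (boxes α (m + 1)) := by
  rw [← mah_preimage]
  exact covN_preimage _ (rev_involutive m) _ _ (boxes_stable α m)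

lemma invRel_empty_iff {X : Type*} (G : Set (X × X)) : invRel G = ∅ ↔ G = ∅ := by
  constructor
  · intro h
    ext ⟨a, b⟩
    simp only [Set.mem_empty_iff_false, iff_false]
    intro hab
    have : (b, a) ∈ invRel G := hab
    simp [h] at this
  · intro h
    ext ⟨a, b⟩
    simp [invRel, h]

theorem stmt_6 {X : Type*} [MetricSpace X] [CompactSpace X]
    (G : Set (X × X)) (hGc : IsClosed G) :
    (∀ (α : Set (Set X)), IsOpenCover α → ∀ m : ℕ, 0 < m →
      covN (mah (invRel G) m) (boxes α (m + 1)) = covN (mah G m) (boxes α (m + 1))) ∧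
    entRel (invRel G) = entRel G := by
  have hcov := fun (α : Set (Set X)) (m : ℕ) => covN_mah_inv G α m
  have hent : ∀ α : Set (Set X), entCov (invRel G) α = entCov G α := by
    intro α
    unfold entCov
    congr 1
    funext m
    rw [hcov α m]
  refine ⟨fun α _ m _ => hcov α m, ?_⟩
  unfold entRel
  by_cases hG : G = ∅
  · rw [if_pos hG, if_pos ((invRel_empty_iff G).mpr hG)]
  · rw [if_neg hG, if_neg (fun h => hG ((invRel_empty_iff G).mp h))]
    congr 1
    ext x
    simp only [Set.mem_setOf_eq]
    constructor
    · rintro ⟨α, hα, rfl⟩; exact ⟨α, hα, by rw [hent α]⟩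
    · rintro ⟨α, hα, rfl⟩; exact ⟨α, hα, by rw [hent α]⟩
end

section
/- Let X be a compact metric space, G a closed relation on X, and suppose there exists a finite subset F = {c_1,…,c_n} ⊆ G such that the infinite Mahavier product ⋆_{n=1}^{∞} F^{-1} is infinite (for example, a Cantor set). Then G generates at least two periodic points, i.e., there exist at least two distinct points x ∈ ⋆_{n=1}^{∞} G^{-1} with σ^n(x) = x for some positive integer n, where σ is the shift map. -/
/-- The infinite Mahavier product `⋆_{i=1}^∞ G⁻¹`. -/
def mahInf {X : Type*} (G : Set (X × X)) : Set (ℕ → X) :=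
  {x | ∀ i : ℕ, (x (i + 1), x i) ∈ G}

/-- The shift map. -/
def shift {X : Type*} (x : ℕ → X) : ℕ → X := fun i => x (i + 1)

/-!
Elements of `⋆ F⁻¹` are infinite walks in a finite graph on a vertex set `V`, so each of them
repeats a vertex within its first `|V|` steps, and cutting the walk at a repetition `x a = x b`
and looping the segment `x a, …, x (b - 1)` gives a periodic point. Suppose there is at most one
periodic point `z`. Then `shift z` is periodic too, so `z` is a constant sequence `v`, and every
segment between two repeated values of a walk consists of `v`'s. A walk repeats a value before
step `|V|` and again after any given step, so it is constantly `v` from step `|V|` on. Hence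
`⋆ F⁻¹` embeds into the finite set of words of length `|V|` over `V`.
-/

open Function

section Mahavier

variable {X : Type*} {F G : Set (X × X)} {x : ℕ → X}

lemma shift_iterate_apply (n : ℕ) (x : ℕ → X) (i : ℕ) : shift^[n] x i = x (i + n) := by
  induction n generalizing x with
  | zero => rfl
  | succ n ih => rw [iterate_succ_apply, ih]; rfl

lemma mahInf_mono (h : F ⊆ G) : mahInf F ⊆ mahInf G := fun _ hx i => h (hx i)

lemma shift_mem_mahInf (hx : x ∈ mahInf F) : shift x ∈ mahInf F := fun i => hx (i + 1)

lemma apply_eq_apply_zero_of_shift_eq (h : shift x = x) (k : ℕ) : x k = x 0 := by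
  induction k with
  | zero => rfl
  | succ k ih => rw [← ih]; exact congrFun h k

def loop (x : ℕ → X) (i p : ℕ) : ℕ → X := fun k => x (i + k % p)

lemma loop_mem_mahInf {i p : ℕ} (hx : x ∈ mahInf F) (hp : 0 < p) (hxp : x (i + p) = x i) :
    loop x i p ∈ mahInf F := by
  intro k
  have hstep : x (i + (k + 1) % p) = x (i + k % p + 1) := by
    rcases Nat.lt_or_ge (k % p + 1) p with hlt | hge
    · rw [← Nat.mod_add_mod, Nat.mod_eq_of_lt hlt]; rfl
    · have hlast : k % p + 1 = p := by have := Nat.mod_lt k hp; omega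
      rw [← Nat.mod_add_mod, hlast, Nat.mod_self, add_zero, add_assoc, hlast, hxp]
  simpa only [loop, hstep] using hx (i + k % p)

lemma loop_mem_periodicPts (x : ℕ → X) (i : ℕ) {p : ℕ} (hp : 0 < p) :
    loop x i p ∈ periodicPts shift := by
  refine ⟨p, hp, funext fun k => ?_⟩
  rw [shift_iterate_apply]
  simp only [loop, Nat.add_mod_right]

lemma loop_sub_eq {i p k : ℕ} (hik : i ≤ k) (hkp : k < i + p) : loop x i p (k - i) = x k := by
  simp only [loop, Nat.mod_eq_of_lt (by omega : k - i < p), Nat.add_sub_cancel' hik]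

lemma exists_lt_map_eq_of_mem_finset (V : Finset X) (hx : ∀ i, x i ∈ V) (k : ℕ) :
    ∃ i j, k ≤ i ∧ i < j ∧ j ≤ k + V.card ∧ x i = x j := by
  obtain ⟨a, ha, b, hb, hab, he⟩ := Finset.exists_ne_map_eq_of_card_lt_of_maps_to
    (s := Finset.Icc k (k + V.card)) (by rw [Nat.card_Icc]; omega) (fun a _ => hx a)
  rw [Finset.mem_Icc] at ha hb
  rcases hab.lt_or_gt with h | h
  · exact ⟨a, b, ha.1, h, hb.2, he⟩
  · exact ⟨b, a, hb.1, h, ha.2, he.symm⟩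

lemma loop_mem_of_apply_eq (hx : x ∈ mahInf F) {a b : ℕ} (hab : a < b) (he : x a = x b) :
    loop x a (b - a) ∈ mahInf F ∩ periodicPts shift :=
  ⟨loop_mem_mahInf hx (by omega) (by rw [Nat.add_sub_cancel' hab.le, he]),
    loop_mem_periodicPts x a (by omega)⟩

variable {z : ℕ → X}

lemma apply_eq_of_subsingleton_periodicPts (hS : (mahInf F ∩ periodicPts shift).Subsingleton)
    (hz : z ∈ mahInf F ∩ periodicPts shift) (hx : x ∈ mahInf F) {a b k : ℕ} (hab : a < b)
    (he : x a = x b) (hak : a ≤ k) (hkb : k < b) : x k = z 0 := by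
  have hshift : shift z = z := hS ⟨shift_mem_mahInf hz.1, by
    obtain ⟨n, hn, hper⟩ := hz.2
    exact ⟨n, hn, hper.apply⟩⟩ hz
  have hloop : loop x a (b - a) = z := hS (loop_mem_of_apply_eq hx hab he) hz
  rw [← loop_sub_eq (x := x) hak (by omega : k < a + (b - a)), hloop,
    apply_eq_apply_zero_of_shift_eq hshift]

lemma apply_eq_of_card_le_of_subsingleton_periodicPts
    (hS : (mahInf F ∩ periodicPts shift).Subsingleton) (hz : z ∈ mahInf F ∩ periodicPts shift)
    (V : Finset X) (hV : ∀ y ∈ mahInf F, ∀ i, y i ∈ V) (hx : x ∈ mahInf F) {k : ℕ}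
    (hk : V.card ≤ k) : x k = z 0 := by
  obtain ⟨a, b, -, hab, hb, he⟩ := exists_lt_map_eq_of_mem_finset V (hV x hx) 0
  obtain ⟨a', b', ha', hab', -, he'⟩ := exists_lt_map_eq_of_mem_finset V (hV x hx) (k + 1)
  have hxa : x a = z 0 := apply_eq_of_subsingleton_periodicPts hS hz hx hab he le_rfl hab
  have hxa' : x a' = z 0 := apply_eq_of_subsingleton_periodicPts hS hz hx hab' he' le_rfl hab'
  exact apply_eq_of_subsingleton_periodicPts hS hz hx (by omega) (hxa.trans hxa'.symm)
    (by omega) (by omega)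

lemma mahInf_finite_of_subsingleton_periodicPts
    (hS : (mahInf F ∩ periodicPts shift).Subsingleton) (hF : F.Finite) : (mahInf F).Finite := by
  rcases (mahInf F).eq_empty_or_nonempty with hempty | ⟨x₀, hx₀⟩
  · rw [hempty]; exact Set.finite_empty
  set V := (hF.image Prod.snd).toFinset
  have hV : ∀ y ∈ mahInf F, ∀ i, y i ∈ V := fun y hy i => by
    simpa [V] using ⟨y (i + 1), hy i⟩
  obtain ⟨a, b, -, hab, -, he⟩ := exists_lt_map_eq_of_mem_finset V (hV x₀ hx₀) 0
  have hz := loop_mem_of_apply_eq hx₀ hab he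
  refine Set.Finite.of_injOn (f := fun y (m : Fin V.card) => y m)
    (t := {w : Fin V.card → X | ∀ m, w m ∈ (V : Set X)}) (fun y hy m => hV y hy m) ?_
    (Set.Finite.pi' fun _ => V.finite_toSet)
  intro y hy y' hy' hyy'
  funext k
  rcases lt_or_ge k V.card with hk | hk
  · exact congrFun hyy' ⟨k, hk⟩
  · rw [apply_eq_of_card_le_of_subsingleton_periodicPts hS hz V hV hy hk,
      apply_eq_of_card_le_of_subsingleton_periodicPts hS hz V hV hy' hk]

end Mahavier

theorem stmt_7_general {X : Type*}
    (G : Set (X × X))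
    (h : ∃ F : Set (X × X), F ⊆ G ∧ F.Finite ∧ (mahInf F).Infinite) :
    ∃ x ∈ mahInf G, ∃ y ∈ mahInf G, x ≠ y ∧
      (∃ n : ℕ, 0 < n ∧ shift^[n] x = x) ∧ (∃ n : ℕ, 0 < n ∧ shift^[n] y = y) := by
  obtain ⟨F, hFG, hF, hinf⟩ := h
  have hnt : (mahInf F ∩ periodicPts shift).Nontrivial := by
    rw [← Set.not_subsingleton_iff]
    exact fun hS => hinf (mahInf_finite_of_subsingleton_periodicPts hS hF)
  obtain ⟨x, ⟨hx, hxper⟩, y, ⟨hy, hyper⟩, hxy⟩ := hnt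
  exact ⟨x, mahInf_mono hFG hx, y, mahInf_mono hFG hy, hxy, hxper, hyper⟩

theorem stmt_7 {X : Type*} [MetricSpace X] [CompactSpace X]
    (G : Set (X × X)) (hGc : IsClosed G)
    (h : ∃ F : Set (X × X), F ⊆ G ∧ F.Finite ∧ (mahInf F).Infinite) :
    ∃ x ∈ mahInf G, ∃ y ∈ mahInf G, x ≠ y ∧
      (∃ n : ℕ, 0 < n ∧ shift^[n] x = x) ∧ (∃ n : ℕ, 0 < n ∧ shift^[n] y = y) :=
  stmt_7_general G h
end

section
/- Let X be a compact metric space and G a closed relation on X. If no periodic point is generated by G, then no Cantor set is finitely generated by G. -/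
lemma shift_iter {X : Type*} (k : ℕ) (x : ℕ → X) (n : ℕ) :
    (shift^[k] x) n = x (n + k) := by
  induction k generalizing x with
  | zero => rfl
  | succ k ih =>
    rw [Function.iterate_succ_apply, ih (shift x)]
    simp [shift, Nat.add_assoc]

theorem stmt_8 {X : Type*} [MetricSpace X] [CompactSpace X]
    (G : Set (X × X)) (hGc : IsClosed G)
    (hper : ∀ x ∈ mahInf G, ∀ n : ℕ, 0 < n → shift^[n] x ≠ x) :
    ∀ F : Set (X × X), F ⊆ G → F.Finite →
      ¬ Nonempty ((mahInf F) ≃ₜ (ℕ → Bool)) := by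
  intro F hFG hFfin hne
  obtain ⟨e⟩ := hne
  obtain ⟨x, hxF⟩ := e.symm (fun _ => false)
  -- the values x (n+1) lie in the finite set fst '' F, so pigeonhole
  have hfin : (Prod.fst '' F).Finite := hFfin.image _
  have hnotinj : ¬ Function.Injective (fun n : ℕ => x (n + 1)) := by
    intro hinj
    have hinf : (Set.range fun n : ℕ => x (n + 1)).Infinite :=
      Set.infinite_range_of_injective hinj
    apply hinf
    apply hfin.subset
    rintro _ ⟨n, rfl⟩
    exact ⟨(x (n + 1), x n), hxF n, rfl⟩
  rw [Function.not_injective_iff] at hnotinj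
  obtain ⟨a, b, hab, hne⟩ := hnotinj
  -- wlog a < b
  wlog h : a < b generalizing a b
  · exact this b a hab.symm (Ne.symm hne) (by omega)
  set i := a + 1 with hi
  set j := b + 1 with hj
  have hij : i < j := by omega
  set p := j - i with hp
  have hp0 : 0 < p := by omega
  have hxixj : x i = x j := hab
  -- the periodic point
  set y : ℕ → X := fun n => x (i + n % p) with hy
  have hkey : ∀ n : ℕ, (y (n + 1), y n) ∈ F := by
    intro n
    have hr : n % p < p := Nat.mod_lt _ hp0
    have hmod : (n % p + 1) % p = (n + 1) % p := Nat.mod_add_mod n p 1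
    rcases lt_or_eq_of_le (Nat.succ_le_of_lt hr) with h1 | h1
    · have h2 : (n + 1) % p = n % p + 1 := by
        rw [← hmod, Nat.mod_eq_of_lt h1]
      have h4 := hxF (i + n % p)
      simp only [hy, h2, ← Nat.add_assoc]
      exact h4
    · -- n % p + 1 = p, wrap around
      have h1' : n % p + 1 = p := h1
      have h2 : (n + 1) % p = 0 := by
        rw [← hmod, h1', Nat.mod_self]
      have h3 : i + n % p + 1 = j := by omega
      have h4 := hxF (i + n % p)
      rw [h3] at h4
      have : y (n + 1) = x j := by
        simp [hy, h2, hxixj]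
      rw [this]
      simpa [hy] using h4
  have hymem : y ∈ mahInf G := fun n => hFG (hkey n)
  have hshift : shift^[p] y = y := by
    funext n
    rw [shift_iter]
    simp [hy, Nat.add_mod_right]
  exact hper y hymem p hp0 hshift
end

section
/- Let X and Y be compact metric spaces and G, H closed relations on X, Y respectively that are topological conjugates. Then ent(G) = ent(H). -/
open Filter Topology

/-! Entropy is a conjugacy invariant because every ingredient of its definition is transported
by `φ`: the coordinatewise map `φ^{m+1}` is a bijection carrying the Mahavier product of `G` onto
that of `H` and the `α`-boxes onto the `φ α`-boxes, so it preserves minimal cover sizes, while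
`α ↦ φ α` is a bijection between the open covers of `X` and of `Y`. -/

section CoverCount

variable {Z W : Type*}

lemma exists_finset_cover_image (e : Z ≃ W) {K : Set Z} {U : Set (Set Z)} {n : ℕ}
    (h : ∃ V : Finset (Set Z), ↑V ⊆ U ∧ V.card = n ∧ K ⊆ ⋃ S ∈ V, S) :
    ∃ V : Finset (Set W), ↑V ⊆ Set.image e '' U ∧ V.card = n ∧ e '' K ⊆ ⋃ S ∈ V, S := by
  classical
  obtain ⟨V, hVU, rfl, hKV⟩ := h
  refine ⟨V.image (Set.image e), ?_,
    Finset.card_image_of_injective _ (Set.image_injective.2 e.injective), ?_⟩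
  · rw [Finset.coe_image]
    exact Set.image_mono hVU
  · rintro _ ⟨z, hz, rfl⟩
    obtain ⟨S, hS, hzS⟩ := Set.mem_iUnion₂.1 (hKV hz)
    exact Set.mem_iUnion₂.2 ⟨e '' S, Finset.mem_image_of_mem _ hS, Set.mem_image_of_mem e hzS⟩

lemma covN_image_equiv (e : Z ≃ W) (K : Set Z) (U : Set (Set Z)) :
    covN (e '' K) (Set.image e '' U) = covN K U := by
  unfold covN
  congr 1
  ext n
  refine ⟨fun h => ?_, exists_finset_cover_image e⟩
  simpa [Set.image_image] using exists_finset_cover_image e.symm h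

end CoverCount

section Transport

variable {X Y : Type*} (e : X ≃ Y)

lemma image_piCongrRight_mah {G : Set (X × X)} {H : Set (Y × Y)}
    (hconj : ∀ x y : X, (x, y) ∈ G ↔ (e x, e y) ∈ H) (m : ℕ) :
    (Equiv.piCongrRight fun _ => e) '' mah G m = mah H m := by
  have : (Equiv.piCongrRight fun _ => e) ⁻¹' mah H m = mah G m := by
    ext x
    simp [mah, hconj]
  rw [← this, Set.image_preimage_eq _ (Equiv.surjective _)]

lemma image_piCongrRight_box (n : ℕ) (A : Fin n → Set X) :
    (Equiv.piCongrRight fun _ => e) '' {x | ∀ i, x i ∈ A i} = {y | ∀ i, y i ∈ e '' A i} := by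
  ext y
  simp [Equiv.image_eq_preimage_symm]

lemma boxes_image_equiv (α : Set (Set X)) (n : ℕ) :
    boxes (Set.image e '' α) n = Set.image (Equiv.piCongrRight fun _ => e) '' boxes α n := by
  ext S
  constructor
  · rintro ⟨B, hB, rfl⟩
    choose A hA hAB using hB
    refine ⟨{x | ∀ i, x i ∈ A i}, ⟨A, hA, rfl⟩, ?_⟩
    simp only [image_piCongrRight_box, hAB]
  · rintro ⟨_, ⟨A, hA, rfl⟩, rfl⟩
    exact ⟨fun i => e '' A i, fun i => Set.mem_image_of_mem _ (hA i), image_piCongrRight_box e n A⟩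

lemma entCov_image_equiv [TopologicalSpace X] [TopologicalSpace Y]
    {G : Set (X × X)} {H : Set (Y × Y)}
    (hconj : ∀ x y : X, (x, y) ∈ G ↔ (e x, e y) ∈ H) (α : Set (Set X)) :
    entCov H (Set.image e '' α) = entCov G α := by
  simp only [entCov, boxes_image_equiv, ← image_piCongrRight_mah e hconj, covN_image_equiv]

lemma conj_symm {G : Set (X × X)} {H : Set (Y × Y)}
    (hconj : ∀ x y : X, (x, y) ∈ G ↔ (e x, e y) ∈ H) :
    ∀ x y : Y, (x, y) ∈ H ↔ (e.symm x, e.symm y) ∈ G := by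
  intro x y
  simp [hconj]

lemma eq_empty_of_conj {G : Set (X × X)} {H : Set (Y × Y)}
    (hconj : ∀ x y : X, (x, y) ∈ G ↔ (e x, e y) ∈ H) (hH : H = ∅) : G = ∅ :=
  Set.eq_empty_of_forall_notMem fun p hp => by simpa [hH] using (hconj p.1 p.2).1 hp

end Transport

lemma IsOpenCover.image_homeomorph {X Y : Type*} [TopologicalSpace X] [TopologicalSpace Y]
    (φ : X ≃ₜ Y) {α : Set (Set X)} (hα : IsOpenCover α) : IsOpenCover (Set.image φ '' α) := by
  refine ⟨?_, ?_⟩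
  · rintro _ ⟨U, hU, rfl⟩
    exact φ.isOpenMap U (hα.1 U hU)
  · rw [← Set.image_sUnion, hα.2, Set.image_univ_of_surjective φ.surjective]

lemma entCov_set_subset_of_conj {X Y : Type*} [TopologicalSpace X] [TopologicalSpace Y]
    (φ : X ≃ₜ Y) {G : Set (X × X)} {H : Set (Y × Y)}
    (hconj : ∀ x y : X, (x, y) ∈ G ↔ (φ x, φ y) ∈ H) :
    {x : EReal | ∃ α : Set (Set X), IsOpenCover α ∧ x = (entCov G α : EReal)} ⊆
      {x : EReal | ∃ β : Set (Set Y), IsOpenCover β ∧ x = (entCov H β : EReal)} := by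
  rintro _ ⟨α, hα, rfl⟩
  exact ⟨_, hα.image_homeomorph φ, congrArg _ (entCov_image_equiv φ.toEquiv hconj α).symm⟩

theorem stmt_12_general {X Y : Type*} [MetricSpace X]
    [MetricSpace Y]
    (G : Set (X × X)) (H : Set (Y × Y))
    (φ : X ≃ₜ Y) (hconj : ∀ x y : X, (x, y) ∈ G ↔ (φ x, φ y) ∈ H) :
    entRel G = entRel H := by
  have hconj' := conj_symm φ.toEquiv hconj
  have hempty : G = ∅ ↔ H = ∅ :=
    ⟨eq_empty_of_conj φ.toEquiv.symm hconj', eq_empty_of_conj φ.toEquiv hconj⟩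
  have hsets := (entCov_set_subset_of_conj φ hconj).antisymm
    (entCov_set_subset_of_conj φ.symm hconj')
  exact if_congr hempty rfl (congrArg sSup hsets)

theorem stmt_12 {X Y : Type*} [MetricSpace X] [CompactSpace X]
    [MetricSpace Y] [CompactSpace Y]
    (G : Set (X × X)) (H : Set (Y × Y)) (hGc : IsClosed G) (hHc : IsClosed H)
    (φ : X ≃ₜ Y) (hconj : ∀ x y : X, (x, y) ∈ G ↔ (φ x, φ y) ∈ H) :
    entRel G = entRel H :=
  stmt_12_general G H φ hconj
end

section
/- Let a > 1 be a real number such that a^k is irrational for every positive integer k, let b ∈ (0,1) be a rational number with 1/a > b, and let H = {(x,y) ∈ [0,1]×[0,1] : y = a·x and x ∈ [b/a², 1/a]} ∪ {(x,y) : y = b·x and x ∈ [1/a², 1]}. Then no periodic point is generated by H: there is no point x ∈ ⋆_{i=1}^{∞} H^{-1} and positive integer m with σ^m(x) = x. -/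
theorem stmt_16 (a b : ℝ) (ha : 1 < a)
    (hirr : ∀ k : ℕ, 0 < k → Irrational (a ^ k))
    (hb : b ∈ Set.Ioo (0 : ℝ) 1) (hbrat : ∃ q : ℚ, b = (q : ℝ)) (hab : 1 / a > b)
    (H : Set (ℝ × ℝ))
    (hH : H = {p : ℝ × ℝ | p.1 ∈ Set.Icc (0 : ℝ) 1 ∧ p.2 ∈ Set.Icc (0 : ℝ) 1 ∧
      ((p.2 = a * p.1 ∧ p.1 ∈ Set.Icc (b / a ^ 2) (1 / a)) ∨
       (p.2 = b * p.1 ∧ p.1 ∈ Set.Icc (1 / a ^ 2) 1))}) :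
    ¬ ∃ x : ℕ → ℝ, x ∈ mahInf H ∧ ∃ m : ℕ, 0 < m ∧ shift^[m] x = x := by
  obtain ⟨q, hq⟩ := hbrat
  rintro ⟨x, hx, m, hm, hper⟩
  subst hH
  have ha0 : 0 < a := lt_trans one_pos ha
  have hb0 : 0 < b := hb.1
  have hx0pos : 0 < x 0 := by
    have h := hx 0
    simp only [Set.mem_setOf_eq] at h
    obtain ⟨_, _, hc⟩ := h
    rcases hc with ⟨heq, hI⟩ | ⟨heq, hI⟩
    · have h1 : 0 < x 1 := lt_of_lt_of_le (by positivity) hI.1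
      rw [heq]; positivity
    · have h1 : 0 < x 1 := lt_of_lt_of_le (by positivity) hI.1
      rw [heq]; positivity
  have key : ∀ n : ℕ, ∃ k l : ℕ, k + l = n ∧ x 0 = a ^ k * b ^ l * x n := by
    intro n
    induction n with
    | zero => exact ⟨0, 0, rfl, by simp⟩
    | succ n ih =>
      obtain ⟨k, l, hkl, hxe⟩ := ih
      have h := hx n
      simp only [Set.mem_setOf_eq] at h
      obtain ⟨_, _, hc⟩ := h
      rcases hc with ⟨heq, _⟩ | ⟨heq, _⟩
      · exact ⟨k + 1, l, by omega, by rw [hxe, heq]; ring⟩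
      · exact ⟨k, l + 1, by omega, by rw [hxe, heq]; ring⟩
  have hshift : ∀ (n : ℕ) (y : ℕ → ℝ) (i : ℕ), shift^[n] y i = y (i + n) := by
    intro n
    induction n with
    | zero => simp
    | succ n ih =>
      intro y i
      rw [Function.iterate_succ_apply, ih]
      simp only [shift]
      congr 1
  have hxm : x m = x 0 := by
    have := congrFun hper 0
    rw [hshift m x 0] at this
    simpa using this
  obtain ⟨k, l, hkl, hxe⟩ := key m
  rw [hxm] at hxe
  have hc : (1 : ℝ) * x 0 = (a ^ k * b ^ l) * x 0 := by rw [one_mul]; exact hxe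
  have hc' : (1 : ℝ) = a ^ k * b ^ l := mul_right_cancel₀ hx0pos.ne' hc
  rcases Nat.eq_zero_or_pos k with hk | hk
  · subst hk
    have hlm : l = m := by omega
    subst hlm
    have : b ^ l < 1 := pow_lt_one₀ hb0.le hb.2 hm.ne'
    simp at hc'
    linarith
  · have hbl : (0 : ℝ) < b ^ l := pow_pos hb0 l
    have hak : a ^ k = (b ^ l)⁻¹ := by
      field_simp
      linarith [hc']
    exact hirr k hk ⟨(q ^ l)⁻¹, by rw [Rat.cast_inv, Rat.cast_pow, ← hq]; exact hak.symm⟩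
end

section
/- Let a ∈ (1,√2) and let b ∈ (a/(a+1), (1+a)/(2a)). Let H = {(x,y) ∈ [0,1/a]×[0,1] : y = (2a/(a+1))·x + (a−1)/(a+1)} ∪ {(x,y) ∈ [0,1]×[0,b] : y = ((b+1)/2)·x + (b−1)/2} ⊆ [0,1]². Then H is closed in [0,1]², and both projections of H onto the first and second coordinates equal [0,1]; consequently H is the graph of a surjective upper semicontinuous set-valued function from [0,1] to [0,1]. -/
/-!
`H` is the union of two compact line segments of positive slope: the first joins
`(0, (a-1)/(a+1))` to `(1/a, 1)`, the second joins `((1-b)/(1+b), 0)` to `(1, b)`; the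
constraints on the ordinates cut the second segment down from `[0, 1]` and are vacuous on the
first. Both projections are therefore unions of two intervals, and the hypotheses on `a` and `b`
make them overlap: `(1-b)/(1+b) < 1/a` and `(a-1)/(a+1) < b`.
-/

open Set

theorem IsCompact.graphOn {X Y : Type*} [TopologicalSpace X] [TopologicalSpace Y] {f : X → Y}
    {s : Set X} (hs : IsCompact s) (hf : ContinuousOn f s) : IsCompact (s.graphOn f) :=
  hs.image_of_continuousOn (continuousOn_id.prodMk hf)

theorem Set.Icc_union_Icc_of_le {α : Type*} [LinearOrder α] {a b c d : α} (hac : a ≤ c)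
    (hcb : c ≤ b) (hbd : b ≤ d) : Icc a b ∪ Icc c d = Icc a d := by
  rw [Icc_union_Icc' hcb (hac.trans (hcb.trans hbd)), min_eq_left hac, max_eq_right hbd]

theorem StrictMono.preimage_Icc_of_eq {α β : Type*} [LinearOrder α] [Preorder β] {f : α → β}
    (hf : StrictMono f) {x y : α} {x' y' : β} (hx : f x = x') (hy : f y = y') :
    f ⁻¹' Icc x' y' = Icc x y := by
  subst hx hy
  ext
  simp [hf.le_iff_le]

theorem setOf_affine_eq_graphOn {R : Type*} [Mul R] [Add R] (m c : R) (s t : Set R) :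
    {p : R × R | p.1 ∈ s ∧ p.2 ∈ t ∧ p.2 = m * p.1 + c} =
      (s ∩ (m * · + c) ⁻¹' t).graphOn (m * · + c) := by
  ext ⟨x, y⟩
  simp only [mem_ofPred_eq, graphOn, mem_image, mem_inter_iff, mem_preimage, Prod.mk.injEq]
  constructor
  · rintro ⟨hx, hy, rfl⟩
    exact ⟨x, ⟨hx, hy⟩, rfl, rfl⟩
  · rintro ⟨x, ⟨hx, hy⟩, rfl, rfl⟩
    exact ⟨hx, hy, rfl⟩

theorem strictMono_affine {R : Type*} [Semiring R] [PartialOrder R] [IsStrictOrderedRing R]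
    {m : R} (hm : 0 < m) (c : R) : StrictMono (m * · + c) :=
  (strictMono_mul_left_of_pos hm).add_const c

theorem image_segment₁ {a : ℝ} (ha : 0 < a) :
    (2 * a / (a + 1) * · + (a - 1) / (a + 1)) '' Icc 0 (1 / a) = Icc ((a - 1) / (a + 1)) 1 := by
  rw [image_affine_Icc' (by positivity)]
  congr 1
  · ring
  · field_simp
    ring

theorem setOf_segment₁_eq_graphOn {a : ℝ} (ha : 1 < a) :
    {p : ℝ × ℝ | p.1 ∈ Icc 0 (1 / a) ∧ p.2 ∈ Icc 0 1 ∧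
      p.2 = 2 * a / (a + 1) * p.1 + (a - 1) / (a + 1)} =
      (Icc 0 (1 / a)).graphOn (2 * a / (a + 1) * · + (a - 1) / (a + 1)) := by
  have hsub : (2 * a / (a + 1) * · + (a - 1) / (a + 1)) '' Icc 0 (1 / a) ⊆ Icc 0 1 :=
    image_segment₁ (by linarith) ▸ Icc_subset_Icc_left (div_nonneg (by linarith) (by linarith))
  rw [setOf_affine_eq_graphOn, inter_eq_left.2 (image_subset_iff.1 hsub)]

theorem setOf_segment₂_eq_graphOn {b : ℝ} (hb₀ : -1 < b) (hb₁ : b ≤ 1) :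
    {p : ℝ × ℝ | p.1 ∈ Icc 0 1 ∧ p.2 ∈ Icc 0 b ∧ p.2 = (b + 1) / 2 * p.1 + (b - 1) / 2} =
      (Icc ((1 - b) / (1 + b)) 1).graphOn ((b + 1) / 2 * · + (b - 1) / 2) := by
  have hb : 0 < 1 + b := by linarith
  rw [setOf_affine_eq_graphOn, (strictMono_affine (by linarith) _).preimage_Icc_of_eq
      (x := (1 - b) / (1 + b)) (y := 1) (by field_simp; ring) (by ring),
    inter_eq_right.2 (Icc_subset_Icc_left (div_nonneg (by linarith) hb.le))]

theorem image_segment₂ {b : ℝ} (hb₀ : -1 < b) :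
    ((b + 1) / 2 * · + (b - 1) / 2) '' Icc ((1 - b) / (1 + b)) 1 = Icc 0 b := by
  have hb : 0 < 1 + b := by linarith
  rw [image_affine_Icc' (by linarith)]
  congr 1
  · field_simp
    ring
  · ring

theorem stmt_19 (a b : ℝ) (ha : a ∈ Set.Ioo 1 (Real.sqrt 2))
    (hb : b ∈ Set.Ioo (a / (a + 1)) ((1 + a) / (2 * a)))
    (H : Set (ℝ × ℝ))
    (hH : H = {p : ℝ × ℝ | p.1 ∈ Set.Icc (0 : ℝ) (1 / a) ∧
        p.2 ∈ Set.Icc (0 : ℝ) 1 ∧ p.2 = (2 * a / (a + 1)) * p.1 + (a - 1) / (a + 1)} ∪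
      {p : ℝ × ℝ | p.1 ∈ Set.Icc (0 : ℝ) 1 ∧ p.2 ∈ Set.Icc (0 : ℝ) b ∧
        p.2 = ((b + 1) / 2) * p.1 + (b - 1) / 2}) :
    IsClosed H ∧ H ⊆ Set.Icc (0 : ℝ) 1 ×ˢ Set.Icc (0 : ℝ) 1 ∧
      Prod.fst '' H = Set.Icc (0 : ℝ) 1 ∧ Prod.snd '' H = Set.Icc (0 : ℝ) 1 := by
  obtain ⟨ha₁, -⟩ := ha
  obtain ⟨hb₁, hb₂⟩ := hb
  have ha₀ : 0 < a := by linarith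
  have hb₀ : 0 < b := lt_trans (by positivity) hb₁
  have hb_lt_one : b < 1 := hb₂.trans <| (div_lt_one (by positivity)).2 (by linarith)
  have hu_le : (1 - b) / (1 + b) ≤ 1 / a := by
    have := (div_lt_iff₀ (by positivity)).1 hb₁
    rw [div_le_div_iff₀ (by linarith) ha₀]
    nlinarith
  have hc_le : (a - 1) / (a + 1) ≤ b :=
    le_of_lt <| lt_trans (div_lt_div_of_pos_right (by linarith) (by linarith)) hb₁
  rw [setOf_segment₁_eq_graphOn ha₁, setOf_segment₂_eq_graphOn (by linarith) hb_lt_one.le] at hH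
  have hfst : Prod.fst '' H = Icc 0 1 := by
    rw [hH, image_union, image_fst_graphOn, image_fst_graphOn]
    exact Icc_union_Icc_of_le (div_nonneg (by linarith) (by linarith)) hu_le
      ((div_le_one ha₀).2 ha₁.le)
  have hsnd : Prod.snd '' H = Icc 0 1 := by
    rw [hH, image_union, image_snd_graphOn, image_snd_graphOn, image_segment₁ ha₀,
      image_segment₂ (by linarith), union_comm]
    exact Icc_union_Icc_of_le (div_nonneg (by linarith) (by linarith)) hc_le hb_lt_one.le
  refine ⟨?_, fun p hp ↦ ⟨hfst ▸ mem_image_of_mem _ hp, hsnd ▸ mem_image_of_mem _ hp⟩, hfst, hsnd⟩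
  rw [hH]
  exact (isCompact_Icc.graphOn (by fun_prop)).isClosed.union
    (isCompact_Icc.graphOn (by fun_prop)).isClosed
end
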